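/- Suppose Y and C are independent and the law of C is atomless. Then for every y ∈ ℝ with ℙ(Y > y) > 0 and ℙ(C > y) > 0, the function γ₀ appearing in the asymptotic representation of Kaplan–Meier integrals is identified as the inverse censoring survival probability: exp(∫_{(-∞,y]} (ℙ(Q > s))⁻¹ dν₀(s)) = (ℙ(C > y))⁻¹; equivalently, ∫_{(-∞,y]} (ℙ(Q > s))⁻¹ dν₀(s) = −log ℙ(C > y). -/

import Mathlib

/-!
Independence makes the censored sub-distribution `ν₀` the law of `C` with density
`c ↦ P(Y > c)`, while `P(Q > s) = P(Y > s) P(C > s)`; so the factor `P(Y > s)` cancels and the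
claim becomes `∫_{(-∞,y]} dG / (1 - G) = -log (1 - G(y))` for the continuous cdf `G` of `C`.
This is the substitution `u = G(s)`: `G` pushes the law of `C` forward to the uniform law on
`(0, 1]`, and `{G ≤ G(y)}` differs from `(-∞, y]` by a null set.
-/

open MeasureTheory ProbabilityTheory Set

lemma lintegral_Ioc_inv_one_sub {c : ℝ} (h0 : 0 ≤ c) (h1 : c < 1) :
    ∫⁻ u in Ioc 0 c, (ENNReal.ofReal (1 - u))⁻¹ = ENNReal.ofReal (-Real.log (1 - c)) := by
  have hpos : ∀ u ∈ Icc 0 c, 0 < 1 - u := fun u hu => by linarith [hu.2]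
  have hcont : ContinuousOn (fun u : ℝ => (1 - u)⁻¹) (Icc 0 c) :=
    (continuousOn_const.sub continuousOn_id).inv₀ fun u hu => (hpos u hu).ne'
  rw [setLIntegral_congr_fun measurableSet_Ioc
      fun u hu => (ENNReal.ofReal_inv_of_pos (hpos u (Ioc_subset_Icc_self hu))).symm,
    ← ofReal_integral_eq_lintegral_ofReal (hcont.integrableOn_Icc.mono_set Ioc_subset_Icc_self)
      ((ae_restrict_iff' measurableSet_Ioc).2 (.of_forall fun u hu =>
        (inv_pos.2 (hpos u (Ioc_subset_Icc_self hu))).le)),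
    ← intervalIntegral.integral_of_le h0]
  have hshift : ∫ u in (0 : ℝ)..c, (1 - u)⁻¹ = ∫ x in (1 - c)..1, x⁻¹ := by
    simp [intervalIntegral.integral_comp_sub_left (a := 0) (b := c) (fun x : ℝ => x⁻¹) 1]
  rw [hshift, integral_inv (by simp [uIcc_of_le (by linarith : 1 - c ≤ 1), h1]),
    Real.log_div one_ne_zero (by linarith), Real.log_one, zero_sub]

namespace ProbabilityTheory

variable {μ : Measure ℝ} [IsProbabilityMeasure μ]

lemma measure_Ioi_eq_ofReal_one_sub_cdf (s : ℝ) : μ (Ioi s) = ENNReal.ofReal (1 - cdf μ s) := by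
  rw [← compl_Iic, prob_compl_eq_one_sub measurableSet_Iic, ← ofReal_cdf,
    ENNReal.ofReal_sub _ (cdf_nonneg μ s), ENNReal.ofReal_one]

variable [NullSingletonClass μ]

lemma continuous_cdf : Continuous (cdf μ) := by
  refine continuous_iff_continuousAt.2 fun a => ?_
  rw [(cdf μ).mono.continuousAt_iff_leftLim_eq_rightLim, StieltjesFunction.rightLim_eq]
  have h := (cdf μ).measure_singleton a
  rw [measure_cdf, measure_singleton, eq_comm, ENNReal.ofReal_eq_zero, sub_nonpos] at h
  exact le_antisymm ((cdf μ).mono.leftLim_le le_rfl) h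

lemma measure_cdf_preimage_Iic {u : ℝ} (hu : u < 1) :
    μ (cdf μ ⁻¹' Iic u) = ENNReal.ofReal u := by
  set A := cdf μ ⁻¹' Iic u
  rcases A.eq_empty_or_nonempty with hA | hA
  · have : u ≤ 0 := by
      by_contra! h
      obtain ⟨s, hs⟩ := ((tendsto_cdf_atBot μ).eventually (eventually_lt_nhds h)).exists
      exact hA.subset (show s ∈ A from hs.le)
    rw [hA, measure_empty, ENNReal.ofReal_of_nonpos this]
  obtain ⟨s₀, hs₀⟩ := ((tendsto_cdf_atTop μ).eventually (eventually_gt_nhds hu)).exists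
  have hbdd : BddAbove A :=
    ⟨s₀, fun s hs => not_lt.1 fun h => (hs.trans_lt hs₀).not_ge ((cdf μ).mono h.le)⟩
  set t := sSup A
  have ht : t ∈ A := (isClosed_le continuous_cdf continuous_const).csSup_mem hA hbdd
  have hAt : A = Iic t := Subset.antisymm (fun s hs => le_csSup hbdd hs)
    fun s hs => ((cdf μ).mono hs).trans ht
  -- continuity at `t` rules out `cdf μ t < u`: points just right of `t` would lie in `A`
  have hFt : cdf μ t = u := by
    refine le_antisymm ht (not_lt.1 fun h => ?_)
    have hnear := (continuous_cdf.tendsto t).eventually (eventually_lt_nhds h)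
    obtain ⟨s, hs, hts⟩ :=
      ((hnear.filter_mono nhdsWithin_le_nhds).and (self_mem_nhdsWithin (s := Ioi t))).exists
    exact (le_csSup hbdd hs.le).not_gt hts
  rw [hAt, ← ofReal_cdf, hFt]

lemma map_cdf_eq_volume_restrict : μ.map (cdf μ) = volume.restrict (Ioc 0 1) := by
  have hF : Measurable (cdf μ) := (cdf μ).mono.measurable
  have : IsProbabilityMeasure (μ.map (cdf μ)) :=
    Measure.isProbabilityMeasure_map hF.aemeasurable
  have : IsFiniteMeasure (volume.restrict (Ioc (0 : ℝ) 1)) := ⟨by simp [Real.volume_Ioc]⟩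
  refine Measure.ext_of_Iic _ _ fun u => ?_
  rw [Measure.map_apply hF measurableSet_Iic, Measure.restrict_apply measurableSet_Iic]
  rcases lt_or_ge u 1 with hu | hu
  · rw [Iic_inter_Ioc_of_le hu.le, Real.volume_Ioc, sub_zero, measure_cdf_preimage_Iic hu]
  · have hpre : cdf μ ⁻¹' Iic u = univ := eq_univ_of_forall fun s => (cdf_le_one μ s).trans hu
    rw [hpre, measure_univ, inter_eq_right.2 fun x hx => hx.2.trans hu, Real.volume_Ioc, sub_zero,
      ENNReal.ofReal_one]

lemma cdf_preimage_Iic_cdf_ae_eq_Iic {y : ℝ} (hy : cdf μ y < 1) :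
    cdf μ ⁻¹' Iic (cdf μ y) =ᵐ[μ] Iic y :=
  (ae_eq_of_subset_of_measure_ge (fun _ hs => (cdf μ).mono hs)
    ((measure_cdf_preimage_Iic hy).trans (ofReal_cdf μ y)).le nullMeasurableSet_Iic
    (measure_ne_top _ _)).symm

lemma lintegral_Iic_inv_measure_Ioi {y : ℝ} (hy : 0 < μ (Ioi y)) :
    ∫⁻ s in Iic y, (μ (Ioi s))⁻¹ ∂μ =
      ENNReal.ofReal (-Real.log (μ (Ioi y)).toReal) := by
  have hF : Measurable (cdf μ) := (cdf μ).mono.measurable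
  have hy' : cdf μ y < 1 := by
    rw [measure_Ioi_eq_ofReal_one_sub_cdf, ENNReal.ofReal_pos, sub_pos] at hy
    exact hy
  have hg : Measurable fun u : ℝ => (ENNReal.ofReal (1 - u))⁻¹ := by fun_prop
  calc ∫⁻ s in Iic y, (μ (Ioi s))⁻¹ ∂μ
      = ∫⁻ s in cdf μ ⁻¹' Iic (cdf μ y), (ENNReal.ofReal (1 - cdf μ s))⁻¹ ∂μ := by
        simp_rw [measure_Ioi_eq_ofReal_one_sub_cdf]
        exact setLIntegral_congr (cdf_preimage_Iic_cdf_ae_eq_Iic hy').symm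
    _ = ∫⁻ u in Ioc 0 (cdf μ y), (ENNReal.ofReal (1 - u))⁻¹ := by
        rw [← setLIntegral_map measurableSet_Iic hg hF, map_cdf_eq_volume_restrict,
          Measure.restrict_restrict measurableSet_Iic, Iic_inter_Ioc_of_le hy'.le]
    _ = ENNReal.ofReal (-Real.log (μ (Ioi y)).toReal) := by
        rw [lintegral_Ioc_inv_one_sub (cdf_nonneg μ y) hy', measure_Ioi_eq_ofReal_one_sub_cdf,
          ENNReal.toReal_ofReal (sub_nonneg.2 hy'.le)]

end ProbabilityTheory

section Censoring

variable {Ω : Type*} [MeasurableSpace Ω]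

lemma antitone_measure_setOf_lt (P : Measure Ω) (X : Ω → ℝ) :
    Antitone fun s => P {ω | s < X ω} :=
  fun _ _ hst => measure_mono fun _ h => hst.trans_lt h

variable {P : Measure Ω} {Y C : Ω → ℝ}

lemma measure_lt_min_eq_mul (hindep : IndepFun Y C P) (s : ℝ) :
    P {ω | s < min (Y ω) (C ω)} = P {ω | s < Y ω} * P {ω | s < C ω} := by
  simp_rw [lt_min_iff]
  exact hindep.measure_inter_preimage_eq_mul _ _ measurableSet_Ioi measurableSet_Ioi

lemma map_restrict_lt_eq_withDensity [IsFiniteMeasure P] (hY : Measurable Y) (hC : Measurable C)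
    (hindep : IndepFun Y C P) :
    (P.restrict {ω | C ω < Y ω}).map C = (P.map C).withDensity fun c => P {ω | c < Y ω} := by
  ext s hs
  have hD : MeasurableSet {p : ℝ × ℝ | p.2 ∈ s ∧ p.2 < p.1} :=
    (measurable_snd hs).inter (measurableSet_lt measurable_snd measurable_fst)
  rw [Measure.map_apply hC hs, Measure.restrict_apply (hC hs), withDensity_apply _ hs,
    ← lintegral_indicator hs]
  calc P (C ⁻¹' s ∩ {ω | C ω < Y ω})
      = (P.map fun ω => (Y ω, C ω)) {p | p.2 ∈ s ∧ p.2 < p.1} := by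
        rw [Measure.map_apply (hY.prodMk hC) hD]; rfl
    _ = ∫⁻ c, P.map Y {a | c ∈ s ∧ c < a} ∂P.map C := by
        rw [(indepFun_iff_map_prod_eq_prod_map_map hY.aemeasurable hC.aemeasurable).1 hindep,
          Measure.prod_apply_symm hD]
        rfl
    _ = ∫⁻ c, s.indicator (fun c => P {ω | c < Y ω}) c ∂P.map C := by
        congr 1 with c
        by_cases hc : c ∈ s
        · simp only [hc, true_and, indicator_of_mem]
          exact Measure.map_apply hY measurableSet_Ioi
        · simp [hc]

end Censoring

/-- Suppose the latent outcome `Y` and the censoring variable `C` are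
independent and the law of `C` is atomless. Then for every `y` with `P(Y > y) > 0` and
`P(C > y) > 0`, the weighting function `γ₀` appearing in the asymptotic representation of
Kaplan–Meier integrals is identified as the inverse censoring survival probability:
`exp(∫_{(-∞,y]} (P(Q > s))⁻¹ dν₀(s)) = (P(C > y))⁻¹`; equivalently,
`∫_{(-∞,y]} (P(Q > s))⁻¹ dν₀(s) = −log P(C > y)`, where `Q = min(Y, C)` and
`ν₀(A) = P(Q ∈ A, C < Y)` is the censored sub-distribution measure. -/
theorem gamma_zero_eq_inverse_censoring_survival
    {Ω : Type*} [MeasurableSpace Ω] (P : Measure Ω) [IsProbabilityMeasure P]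
    (Y C : Ω → ℝ) (hY : Measurable Y) (hC : Measurable C)
    (hindep : IndepFun Y C P)
    (hatomless : ∀ c : ℝ, P {ω | C ω = c} = 0)
    (y : ℝ) (hyY : 0 < P {ω | y < Y ω}) (hyC : 0 < P {ω | y < C ω}) :
    ∫⁻ s in Iic y, (P {ω | s < min (Y ω) (C ω)})⁻¹
        ∂(Measure.map (fun ω => min (Y ω) (C ω)) (P.restrict {ω | C ω < Y ω}))
      = ENNReal.ofReal (-Real.log (P {ω | y < C ω}).toReal) := by
  have hmapC : ∀ s, P.map C (Ioi s) = P {ω | s < C ω} :=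
    fun _ => Measure.map_apply hC measurableSet_Ioi
  have : IsProbabilityMeasure (P.map C) := Measure.isProbabilityMeasure_map hC.aemeasurable
  have : NullSingletonClass (P.map C) :=
    ⟨fun c => (Measure.map_apply hC (measurableSet_singleton c)).trans (hatomless c)⟩
  have hQ : (P.restrict {ω | C ω < Y ω}).map (fun ω => min (Y ω) (C ω))
      = (P.restrict {ω | C ω < Y ω}).map C :=
    Measure.map_congr <| (ae_restrict_iff' (measurableSet_lt hC hY)).2 <|
      .of_forall fun ω hω => min_eq_right (le_of_lt hω)
  have hSY := antitone_measure_setOf_lt P Y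
  have hinvSQ : Measurable fun s => (P {ω | s < min (Y ω) (C ω)})⁻¹ :=
    (antitone_measure_setOf_lt P fun ω => min (Y ω) (C ω)).measurable.inv
  have hcancel : ∀ s ∈ Iic y,
      P {ω | s < Y ω} * (P {ω | s < min (Y ω) (C ω)})⁻¹ = (P.map C (Ioi s))⁻¹ := by
    intro s hs
    have hpos : P {ω | s < Y ω} ≠ 0 := (hyY.trans_le (hSY hs)).ne'
    rw [measure_lt_min_eq_mul hindep, ENNReal.mul_inv (.inl hpos) (.inl (measure_ne_top _ _)),
      ENNReal.mul_inv_cancel_left hpos (measure_ne_top _ _), hmapC]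
  rw [hQ, map_restrict_lt_eq_withDensity hY hC hindep,
    setLIntegral_withDensity_eq_setLIntegral_mul _ hSY.measurable hinvSQ measurableSet_Iic,
    ← hmapC y, ← lintegral_Iic_inv_measure_Ioi (by rwa [hmapC])]
  exact setLIntegral_congr_fun measurableSet_Iic hcancel
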